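/- In the situation below (M free of rank d over K⟨φ⟩ with ρ-action matrix D, and J a Janet basis for ⟨p_1,…,p_d⟩), M is finitely generated as K⟨ρ⟩-module (i.e., there are finitely many elements of M whose S-iterates span M over K) if and only if n_i < ∞ for all i = 1, …, d. -/

import Mathlib

/-!
Common setup: the skew polynomial ring `D = K{φ,ρ}` (with commuting endomorphisms
`γφ, γρ : K → K`, `φ·x = γφ(x)·φ`, `ρ·x = γρ(x)·ρ`), the free left `D`-module
`𝓕 = ⊕_{i=1}^d D κ_i`, its monomials `φ^k ρ^j κ_i`, the monomial order, cones,
Janet bases, and the data attached to a `D`-module `M` that is free over `K⟨φ⟩`.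

`𝓕` is realized concretely as finitely supported coefficient functions on the
set of monomial indices `(i, k, j) ↔ φ^k ρ^j κ_i`; multiplication by `φ` resp. `ρ`
is the K-semilinear shift operator `PhiMul` resp. `RhoMul`.
-/

namespace JanetSetup

/-- Index of a monomial `φ^k ρ^j κ_i` of `𝓕`: the triple `(i, k, j)`. -/
abbrev MonIx (d : ℕ) := Fin d × ℕ × ℕ

/-- The free module `𝓕 = ⊕_{i=1}^d D κ_i`, as coefficient functions on monomials. -/
abbrev Fr (K : Type) [Field K] (d : ℕ) : Type := MonIx d →₀ K

variable {K : Type} [Field K] {d : ℕ}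

/-- Left multiplication by the variable `φ` on `𝓕`. -/
noncomputable def PhiMul (γφ : K →+* K) (f : Fr K d) : Fr K d :=
  Finsupp.mapDomain (fun m => (m.1, m.2.1 + 1, m.2.2))
    (Finsupp.mapRange (fun x => γφ x) (map_zero γφ) f)

/-- Left multiplication by the variable `ρ` on `𝓕`. -/
noncomputable def RhoMul (γρ : K →+* K) (f : Fr K d) : Fr K d :=
  Finsupp.mapDomain (fun m => (m.1, m.2.1, m.2.2 + 1))
    (Finsupp.mapRange (fun x => γρ x) (map_zero γρ) f)

/-- The left `D`-submodule of `𝓕` generated by a set `s` (as a `K`-subspace: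
the `K`-span of all `φ^k ρ^j g`, `g ∈ s`). -/
noncomputable def DSpan (γφ γρ : K →+* K) (s : Set (Fr K d)) : Submodule K (Fr K d) :=
  Submodule.span K
    {x | ∃ (k j : ℕ) (g : Fr K d), g ∈ s ∧ x = (PhiMul γφ)^[k] ((RhoMul γρ)^[j] g)}

/-- The monomial order: lexicographic with `ρ ≺ φ`, position-over-term with
`κ_{i₁} ≻ κ_{i₂}` for `i₁ < i₂`. -/
def MLt (a b : MonIx d) : Prop :=
  b.1 < a.1 ∨ (a.1 = b.1 ∧ (a.2.1 < b.2.1 ∨ (a.2.1 = b.2.1 ∧ a.2.2 < b.2.2)))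

/-- `m` is the leading monomial of `f`. -/
def IsLm (f : Fr K d) (m : MonIx d) : Prop :=
  m ∈ f.support ∧ ∀ m' ∈ f.support, m' ≠ m → MLt m' m

/-- The `μ`-cone of a monomial `m`; `μ = (φ ∈ μ, ρ ∈ μ)` as a pair of Booleans. -/
def Cone (μ : Bool × Bool) (m : MonIx d) : Set (MonIx d) :=
  {x | ∃ a b : ℕ, (μ.1 = true ∨ a = 0) ∧ (μ.2 = true ∨ b = 0) ∧
      x = (m.1, m.2.1 + a, m.2.2 + b)}

/-- A Janet basis `{(b_1,μ_1),…,(b_r,μ_r)}` for the submodule `N ⊆ 𝓕`: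
the `b_i` generate `N` as a left `D`-module and the set of leading monomials of
nonzero elements of `N` is the disjoint union of the cones `Mon(μ_i)·lm(b_i)`. -/
structure JanetBasis (γφ γρ : K →+* K) (d : ℕ) (N : Submodule K (Fr K d)) where
  r : ℕ
  b : Fin r → Fr K d
  μ : Fin r → Bool × Bool
  /-- the leading monomial of `b i` -/
  lmb : Fin r → MonIx d
  b_ne : ∀ i, b i ≠ 0
  b_lm : ∀ i, IsLm (b i) (lmb i)
  pair_inj : Function.Injective fun i => (b i, μ i)
  span_eq : DSpan γφ γρ (Set.range b) = N
  lm_cover : ∀ f ∈ N, f ≠ 0 → ∀ m, IsLm f m → ∃ i, m ∈ Cone (μ i) (lmb i)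
  cone_lm : ∀ i, ∀ m ∈ Cone (μ i) (lmb i), ∃ f ∈ N, f ≠ 0 ∧ IsLm f m
  disj : ∀ i i' m, m ∈ Cone (μ i) (lmb i) → m ∈ Cone (μ i') (lmb i') → i = i'

variable (γφ γρ : K →+* K)

/-- `f` is reduced (in normal form) w.r.t. the pairs of `J` indexed by `P`:
no monomial of `f` lies in one of the corresponding cones. -/
def IsReduced {N : Submodule K (Fr K d)} (J : JanetBasis γφ γρ d N)
    (P : Set (Fin J.r)) (f : Fr K d) : Prop :=
  ∀ m ∈ f.support, ∀ i ∈ P, m ∉ Cone (J.μ i) (J.lmb i)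

/-- `h` is the normal form `NF(g, ·)` of `g` with respect to the pairs of `J`
indexed by `P`: the reduction process subtracts left multiples of the `b i`
(`i ∈ P`), so `g - h` lies in the `D`-span of these, and the result is reduced. -/
def IsNFOf {N : Submodule K (Fr K d)} (J : JanetBasis γφ γρ d N)
    (P : Set (Fin J.r)) (g h : Fr K d) : Prop :=
  g - h ∈ DSpan γφ γρ (J.b '' P) ∧ IsReduced γφ γρ J P h

/-- The projection `pr : 𝓕 → M`, `φ^k ρ^j κ_i ↦ F^k S^j κ̄_i`, for a `D`-module `M`
with `φ`-action `F`, `ρ`-action `S` and distinguished elements `κb i = κ̄_i`. -/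
noncomputable def pr {M : Type} [AddCommGroup M] [Module K M]
    (F S : M →+ M) (κb : Fin d → M) (f : Fr K d) : M :=
  f.sum fun m x => x • F^[m.2.1] (S^[m.2.2] (κb m.1))

/-- The relation `p_i = ρ κ_i − Σ_j D_{ij} κ_j ∈ 𝓕`, where the entry `D_{ij} ∈ K⟨φ⟩`
is recorded as the finitely supported coefficient function of its powers of `φ`. -/
noncomputable def pelt (Dmat : Fin d → Fin d → (ℕ →₀ K)) (i : Fin d) : Fr K d :=
  Finsupp.single (i, 0, 1) (1 : K)
    - ∑ j : Fin d, (Dmat i j).sum fun k x => Finsupp.single (j, k, 0) x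

/-- `n_i = inf{n | ∃ (b,μ) ∈ J, lm(b) = φ^n κ_i} ∈ ℕ∪{∞}`. -/
noncomputable def nVal {N : Submodule K (Fr K d)} (J : JanetBasis γφ γρ d N)
    (i : Fin d) : ℕ∞ :=
  sInf {c : ℕ∞ | ∃ n : ℕ, c = n ∧ ∃ ix, J.lmb ix = (i, n, 0)}

/-- `m_i = inf{n | ∃ (b,μ) ∈ J, ∃ l ≥ 0, lm(b) = φ^n ρ^l κ_i} ∈ ℕ∪{∞}`. -/
noncomputable def mVal {N : Submodule K (Fr K d)} (J : JanetBasis γφ γρ d N)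
    (i : Fin d) : ℕ∞ :=
  sInf {c : ℕ∞ | ∃ n : ℕ, c = n ∧ ∃ ix l, J.lmb ix = (i, n, l)}

/-- `W_gen = {φ^j κ_i | 1 ≤ i ≤ d, 0 ≤ j < n_i} ⊆ 𝓕`. -/
def Wgen {N : Submodule K (Fr K d)} (J : JanetBasis γφ γρ d N) : Set (Fr K d) :=
  {w | ∃ (i : Fin d) (j : ℕ), (j : ℕ∞) < nVal γφ γρ J i ∧
      w = Finsupp.single (i, j, 0) (1 : K)}

/-- `W_ind = {φ^j κ_i | 1 ≤ i ≤ d, 0 ≤ j < m_i} ⊆ 𝓕`. -/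
def Wind {N : Submodule K (Fr K d)} (J : JanetBasis γφ γρ d N) : Set (Fr K d) :=
  {w | ∃ (i : Fin d) (j : ℕ), (j : ℕ∞) < mVal γφ γρ J i ∧
      w = Finsupp.single (i, j, 0) (1 : K)}

end JanetSetup

open JanetSetup

/-!
Reducing modulo the Janet basis, every element of `𝓕` is congruent modulo
`N = ⟨p_1, …, p_d⟩` to a combination of standard monomials (those outside all cones), and a
nonzero element of `N` cannot consist of standard monomials only. Moreover `N` is exactly the
kernel of `pr : 𝓕 → M`: modulo the `p_i` every element has `ρ`-degree `0`, and on these `pr` is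
injective because `M` is free over `K⟨φ⟩`.

If every `n_i` is finite, a standard monomial `φ^k ρ^j κ_i` has `k < n_i`, so the finitely many
`F^k κ̄_i` with `k < n_i` generate `M` over `K⟨ρ⟩`. Conversely, if `M` is generated by
`g_1, …, g_n`, lift them to `h_t ∈ 𝓕`. A reduction step can raise the `φ`-degree by at most a
fixed amount, and only when moving to a larger index `i`; hence the normal forms of all
`ρ^l h_t` have bounded `φ`-degree `C`, and so every element of `M` is the image of a combination
of standard monomials of `φ`-degree `≤ C`. Applied to `F^{C+1} κ̄_i`, the difference of the two
preimages lies in `N`, so `φ^{C+1} κ_i` must be a leading monomial of `N`, and `n_i ≤ C + 1`.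
-/

open Finsupp

lemma Finsupp.exists_sub_mem_of_forall_mem_support {α R : Type*} [Ring R]
    {N : Submodule R (α →₀ R)} {P : α → α → Prop} (f : α →₀ R)
    (h : ∀ a ∈ f.support, ∃ v, single a 1 - v ∈ N ∧ ∀ b ∈ v.support, P a b) :
    ∃ v, f - v ∈ N ∧ ∀ b ∈ v.support, ∃ a ∈ f.support, P a b := by
  classical
  choose! V hVN hVP using h
  refine ⟨∑ a ∈ f.support, f a • V a, ?_, fun b hb => ?_⟩
  · have hsum : f - ∑ a ∈ f.support, f a • V a = ∑ a ∈ f.support, f a • (single a 1 - V a) := by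
      simp only [smul_sub, Finset.sum_sub_distrib, smul_single_one]
      congr 1
      exact f.sum_single.symm
    rw [hsum]
    exact N.sum_mem fun a ha => N.smul_mem _ (hVN a ha)
  · obtain ⟨a, ha, hb⟩ := mem_support_finsetSum b hb
    exact ⟨a, ha, hVP a ha b (support_smul hb)⟩

lemma iterate_map_smul_of_semilinear {R M : Type*} [Semiring R] [AddCommMonoid M] [Module R M]
    {σ : R →+* R} {F : M → M} (hF : ∀ (x : R) (m : M), F (x • m) = σ x • F m) (n : ℕ) (x : R)
    (m : M) : F^[n] (x • m) = (σ ^ n) x • F^[n] m := by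
  induction n with
  | zero => simp
  | succ n ih =>
    rw [Function.iterate_succ_apply', ih, hF, pow_succ', RingHom.coe_mul, Function.comp_apply,
      Function.iterate_succ_apply']

lemma exists_fin_span_iterate_eq_top {R M ι : Type*} [Semiring R] [AddCommMonoid M] [Module R M]
    [Finite ι] (S : M → M) (x : ι → M)
    (hx : Submodule.span R {m : M | ∃ (i : ι) (l : ℕ), m = S^[l] (x i)} = ⊤) :
    ∃ (n : ℕ) (g : Fin n → M),
      Submodule.span R {m : M | ∃ (i : Fin n) (l : ℕ), m = S^[l] (g i)} = ⊤ := by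
  obtain ⟨n, ⟨e⟩⟩ := Finite.exists_equiv_fin ι
  refine ⟨n, x ∘ e.symm, hx ▸ congrArg _ (Set.ext fun m => ?_)⟩
  exact ⟨fun ⟨i, l, h⟩ => ⟨e.symm i, l, h⟩, fun ⟨i, l, h⟩ => ⟨e i, l, by simpa using h⟩⟩

namespace JanetSetup

variable {K : Type} [Field K] {d : ℕ}

def shift (a b : ℕ) (m : MonIx d) : MonIx d := (m.1, m.2.1 + a, m.2.2 + b)

lemma shift_injective (a b : ℕ) : Function.Injective (shift (d := d) a b) := by
  rintro ⟨i, k, j⟩ ⟨i', k', j'⟩ h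
  simp only [shift, Prod.ext_iff] at h ⊢
  omega

section MulPhiRho

variable (γφ γρ : K →+* K)

/-- Left multiplication by `φ^a ρ^b` on `𝓕`. -/
noncomputable def mulPhiRho (a b : ℕ) : Fr K d →+ Fr K d :=
  (mapDomain.addMonoidHom (shift a b)).comp (mapRange.addMonoidHom (γφ ^ a * γρ ^ b).toAddMonoidHom)

variable {γφ γρ}

lemma mulPhiRho_apply (a b : ℕ) (f : Fr K d) :
    mulPhiRho γφ γρ a b f = mapDomain (shift a b) (mapRange (γφ ^ a * γρ ^ b) (map_zero _) f) :=
  rfl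

lemma mulPhiRho_single (a b : ℕ) (m : MonIx d) (x : K) :
    mulPhiRho γφ γρ a b (single m x) = single (shift a b m) ((γφ ^ a * γρ ^ b) x) := by
  rw [mulPhiRho_apply, mapRange_single, mapDomain_single]

lemma support_mulPhiRho [DecidableEq (MonIx d)] (a b : ℕ) (f : Fr K d) :
    (mulPhiRho γφ γρ a b f).support = f.support.image (shift a b) := by
  rw [mulPhiRho_apply, mapDomain_support_of_injective (shift_injective a b),
    support_mapRange_of_injective _ _ (γφ ^ a * γρ ^ b).injective]

lemma mulPhiRho_apply_shift (a b : ℕ) (f : Fr K d) (m : MonIx d) :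
    mulPhiRho γφ γρ a b f (shift a b m) = (γφ ^ a * γρ ^ b) (f m) := by
  rw [mulPhiRho_apply, mapDomain_apply (shift_injective a b), mapRange_apply]

lemma mapDomain_mapRange_mulPhiRho (e : MonIx d → MonIx d) (σ : K →+* K) (a b : ℕ)
    (f : Fr K d) :
    mapDomain e (mapRange σ (map_zero σ) (mulPhiRho γφ γρ a b f)) =
      mapDomain (e ∘ shift a b) (mapRange (σ * (γφ ^ a * γρ ^ b)) (map_zero _) f) := by
  rw [mulPhiRho_apply, ← mapDomain_mapRange _ _ _ _ (map_add σ), mapDomain_comp]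
  congr 2
  ext m
  simp

lemma iterate_PhiMul_iterate_RhoMul (a b : ℕ) (f : Fr K d) :
    (PhiMul γφ)^[a] ((RhoMul γρ)^[b] f) = mulPhiRho γφ γρ a b f := by
  induction a with
  | zero =>
    induction b with
    | zero =>
      have hid : shift (d := d) 0 0 = id := rfl
      simp [mulPhiRho_apply, hid]
    | succ b ih =>
      have hsh : (fun m : MonIx d => (m.1, m.2.1, m.2.2 + 1)) ∘ shift 0 b = shift 0 (b + 1) := by
        funext m; simp only [Function.comp, shift, add_assoc]
      rw [Function.iterate_zero_apply] at ih ⊢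
      rw [Function.iterate_succ_apply', ih, RhoMul, mapDomain_mapRange_mulPhiRho, hsh,
        mulPhiRho_apply, pow_zero, one_mul, one_mul, pow_succ']
  | succ a ih =>
    have hsh : (fun m : MonIx d => (m.1, m.2.1 + 1, m.2.2)) ∘ shift a b = shift (a + 1) b := by
      funext m; simp only [Function.comp, shift, add_assoc]
    rw [Function.iterate_succ_apply', ih, PhiMul, mapDomain_mapRange_mulPhiRho, hsh,
      mulPhiRho_apply, ← mul_assoc, ← pow_succ']

lemma mulPhiRho_mem_DSpan {s : Set (Fr K d)} {g : Fr K d} (hg : g ∈ s) (a b : ℕ) :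
    mulPhiRho γφ γρ a b g ∈ DSpan γφ γρ s :=
  Submodule.subset_span ⟨a, b, g, hg, (iterate_PhiMul_iterate_RhoMul a b g).symm⟩

end MulPhiRho

section Order

def mltKey (m : MonIx d) : ℕ ×ₗ ℕ ×ₗ ℕ := toLex (d - 1 - m.1.val, toLex (m.2.1, m.2.2))

lemma mlt_iff_mltKey_lt {a b : MonIx d} : MLt a b ↔ mltKey a < mltKey b := by
  obtain ⟨⟨i, hi⟩, k, j⟩ := a
  obtain ⟨⟨i', hi'⟩, k', j'⟩ := b
  simp only [MLt, mltKey, Prod.Lex.toLex_lt_toLex, Fin.lt_def, Fin.mk.injEq]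
  omega

lemma mltKey_injective : Function.Injective (mltKey (d := d)) := by
  rintro ⟨⟨i, hi⟩, k, j⟩ ⟨⟨i', hi'⟩, k', j'⟩ h
  simp only [mltKey, toLex_inj, Prod.mk.injEq, Fin.mk.injEq] at h ⊢
  omega

lemma wellFounded_mlt : WellFounded (MLt (d := d)) :=
  Subrelation.wf mlt_iff_mltKey_lt.mp (InvImage.wf mltKey wellFounded_lt)

lemma exists_isLm {f : Fr K d} (hf : f ≠ 0) : ∃ m, IsLm f m := by
  obtain ⟨m, hm, hmax⟩ := f.support.exists_max_image mltKey (support_nonempty_iff.mpr hf)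
  exact ⟨m, hm, fun m' hm' hne =>
    mlt_iff_mltKey_lt.mpr ((hmax m' hm').lt_of_ne (mltKey_injective.ne hne))⟩

lemma MLt.shift {m m' : MonIx d} (h : MLt m' m) (a b : ℕ) : MLt (shift a b m') (shift a b m) := by
  obtain ⟨i, k, j⟩ := m; obtain ⟨i', k', j'⟩ := m'
  simp only [MLt, JanetSetup.shift] at h ⊢
  omega

end Order

section Projection

variable {γφ γρ : K →+* K} {M : Type} [AddCommGroup M] [Module K M] (F S : M →+ M)
  (κb : Fin d → M)

variable (K) in
/-- The projection `pr` as a `K`-linear map. -/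
noncomputable def prL : Fr K d →ₗ[K] M :=
  linearCombination K fun m => F^[m.2.1] (S^[m.2.2] (κb m.1))

variable {F S κb}

lemma prL_single (m : MonIx d) (x : K) :
    prL K F S κb (single m x) = x • F^[m.2.1] (S^[m.2.2] (κb m.1)) :=
  linearCombination_single _ _ _

lemma prL_mulPhiRho
    (hF : ∀ (x : K) (m : M), F (x • m) = γφ x • F m)
    (hS : ∀ (x : K) (m : M), S (x • m) = γρ x • S m)
    (hFS : ∀ m : M, F (S m) = S (F m)) (a b : ℕ) (f : Fr K d) :
    prL K F S κb (mulPhiRho γφ γρ a b f) = F^[a] (S^[b] (prL K F S κb f)) := by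
  induction f using Finsupp.induction_linear with
  | zero => simp [iterate_map_zero]
  | add f g hf hg => simp only [map_add, hf, hg, iterate_map_add]
  | single m x =>
    rw [mulPhiRho_single, prL_single, prL_single, iterate_map_smul_of_semilinear hS,
      iterate_map_smul_of_semilinear hF, RingHom.coe_mul, Function.comp_apply,
      ← (Function.Commute.iterate_iterate hFS m.2.1 b).eq, ← Function.iterate_add_apply,
      ← Function.iterate_add_apply]
    simp only [shift, add_comm]

variable {Dmat : Fin d → Fin d → (ℕ →₀ K)}

lemma prL_pelt
    (hact : ∀ i, S (κb i) = ∑ j : Fin d, (Dmat i j).sum fun k x => x • F^[k] (κb j))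
    (i : Fin d) : prL K F S κb (pelt Dmat i) = 0 := by
  simp only [pelt, map_sub, map_sum, map_finsuppSum, prL_single, one_smul,
    Function.iterate_zero_apply, Function.iterate_one, hact, sub_self]

lemma DSpan_pelt_le_ker_prL
    (hF : ∀ (x : K) (m : M), F (x • m) = γφ x • F m)
    (hS : ∀ (x : K) (m : M), S (x • m) = γρ x • S m)
    (hFS : ∀ m : M, F (S m) = S (F m))
    (hact : ∀ i, S (κb i) = ∑ j : Fin d, (Dmat i j).sum fun k x => x • F^[k] (κb j)) :
    DSpan γφ γρ (Set.range (pelt Dmat)) ≤ LinearMap.ker (prL K F S κb) := by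
  refine Submodule.span_le.mpr ?_
  rintro _ ⟨k, j, _, ⟨i, rfl⟩, rfl⟩
  rw [SetLike.mem_coe, LinearMap.mem_ker, iterate_PhiMul_iterate_RhoMul,
    prL_mulPhiRho hF hS hFS, prL_pelt hact, iterate_map_zero, iterate_map_zero]

variable (γφ γρ) in
lemma exists_rhoFree_single (m : MonIx d) :
    ∃ v, single m 1 - v ∈ DSpan γφ γρ (Set.range (pelt Dmat)) ∧ ∀ m' ∈ v.support, m'.2.2 = 0 := by
  classical
  obtain ⟨i, k, j⟩ := m
  induction j generalizing i k with
  | zero =>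
    refine ⟨single (i, k, 0) 1, by simp, fun m' hm' => ?_⟩
    rw [Finset.mem_singleton.mp (support_single_subset hm')]
  | succ j ih =>
    -- `φ^k ρ^{j+1} κ_i = φ^k ρ^j p_i + φ^k ρ^j (ρ κ_i - p_i)`, the last term of `ρ`-degree `j`
    set Q := single (i, 0, 1) 1 - pelt Dmat i
    have hQ : ∀ m ∈ Q.support, m.2.2 = 0 := by
      intro m hm
      simp only [Q, pelt, sub_sub_cancel] at hm
      obtain ⟨j', -, hj'⟩ := mem_support_finsetSum m hm
      obtain ⟨k', -, hk'⟩ := Finset.mem_biUnion.mp (support_sum hj')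
      rw [Finset.mem_singleton.mp (support_single_subset hk')]
    have hE : ∀ m ∈ (mulPhiRho γφ γρ k j Q).support, ∃ v,
        single m 1 - v ∈ DSpan γφ γρ (Set.range (pelt Dmat)) ∧ ∀ m' ∈ v.support, m'.2.2 = 0 := by
      intro m hm
      rw [support_mulPhiRho] at hm
      obtain ⟨m₀, hm₀, rfl⟩ := Finset.mem_image.mp hm
      have := ih m₀.1 (m₀.2.1 + k)
      simpa [shift, hQ m₀ hm₀] using this
    obtain ⟨v, hv, hv0⟩ := exists_sub_mem_of_forall_mem_support _ hE
    refine ⟨v, ?_, fun m' hm' => (hv0 m' hm').elim fun _ h => h.2⟩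
    have hsplit : single (i, k, j + 1) 1 - v
        = mulPhiRho γφ γρ k j (pelt Dmat i) + (mulPhiRho γφ γρ k j Q - v) := by
      rw [add_sub, ← map_add, add_sub_cancel, mulPhiRho_single, map_one]
      simp [shift, add_comm]
    rw [hsplit]
    exact add_mem (mulPhiRho_mem_DSpan (Set.mem_range_self i) k j) hv

lemma eq_zero_of_prL_eq_zero
    (hli : LinearIndependent K fun p : Fin d × ℕ => F^[p.2] (κb p.1))
    {v : Fr K d} (hv : ∀ m ∈ v.support, m.2.2 = 0) (h : prL K F S κb v = 0) : v = 0 := by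
  have hinj : Function.Injective fun p : Fin d × ℕ => ((p.1, p.2, 0) : MonIx d) :=
    fun p q hpq => by simp only [Prod.mk.injEq] at hpq; exact Prod.ext hpq.1 hpq.2.1
  refine linearIndepOn_iff.mp ((linearIndepOn_range_iff hinj _).mpr hli) v ?_ h
  intro m hm
  exact ⟨(m.1, m.2.1), Prod.ext rfl (Prod.ext rfl (hv m hm).symm)⟩

lemma ker_prL_eq
    (hF : ∀ (x : K) (m : M), F (x • m) = γφ x • F m)
    (hS : ∀ (x : K) (m : M), S (x • m) = γρ x • S m)
    (hFS : ∀ m : M, F (S m) = S (F m))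
    (hli : LinearIndependent K fun p : Fin d × ℕ => F^[p.2] (κb p.1))
    (hact : ∀ i, S (κb i) = ∑ j : Fin d, (Dmat i j).sum fun k x => x • F^[k] (κb j)) :
    LinearMap.ker (prL K F S κb) = DSpan γφ γρ (Set.range (pelt Dmat)) := by
  refine le_antisymm (fun f hf => ?_) (DSpan_pelt_le_ker_prL hF hS hFS hact)
  obtain ⟨v, hfv, hv⟩ := exists_sub_mem_of_forall_mem_support f
    fun m _ => exists_rhoFree_single γφ γρ (Dmat := Dmat) m
  have hv0 : v = 0 := by
    refine eq_zero_of_prL_eq_zero (S := S) hli (fun m hm => ?_) ?_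
    · obtain ⟨-, -, h⟩ := hv m hm
      exact h
    · have := DSpan_pelt_le_ker_prL hF hS hFS hact hfv
      rw [LinearMap.mem_ker, map_sub, LinearMap.mem_ker.mp hf, zero_sub, neg_eq_zero] at this
      exact this
  rwa [hv0, sub_zero] at hfv

lemma prL_surjective
    (hsp : Submodule.span K (Set.range fun p : Fin d × ℕ => F^[p.2] (κb p.1)) = ⊤) :
    Function.Surjective (prL K F S κb) := by
  rw [← LinearMap.range_eq_top, eq_top_iff, ← hsp, Submodule.span_le]
  rintro _ ⟨p, rfl⟩
  exact ⟨single (p.1, p.2, 0) 1, by rw [prL_single, one_smul]; rfl⟩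

end Projection

section Reduction

variable {γφ γρ : K →+* K} {N : Submodule K (Fr K d)} (J : JanetBasis γφ γρ d N)

/-- All `φ^a ρ^b · lm(b_s)`; by `lm_cover`, these are the leading monomials of `N`. -/
def lmSet : Set (MonIx d) := {m | ∃ s a b, m = shift a b (J.lmb s)}

noncomputable def maxPhiDeg : ℕ :=
  Finset.univ.sup fun s : Fin J.r => (J.b s).support.sup fun m => m.2.1

variable {J}

lemma shift_mem_lmSet {m : MonIx d} (hm : m ∈ lmSet J) (a b : ℕ) : shift a b m ∈ lmSet J := by
  obtain ⟨s, a', b', rfl⟩ := hm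
  refine ⟨s, a + a', b + b', ?_⟩
  simp only [shift, Prod.mk.injEq, true_and]
  omega

lemma le_maxPhiDeg {s : Fin J.r} {m : MonIx d} (hm : m ∈ (J.b s).support) :
    m.2.1 ≤ maxPhiDeg J :=
  (Finset.le_sup (f := fun m : MonIx d => m.2.1) hm).trans
    (Finset.le_sup (f := fun s : Fin J.r => (J.b s).support.sup fun m => m.2.1)
      (Finset.mem_univ s))

lemma exists_reducer {m : MonIx d} (hm : m ∈ lmSet J) :
    ∃ tail, single m 1 - tail ∈ N ∧
      ∀ m' ∈ tail.support, MLt m' m ∧ m'.2.1 ≤ m.2.1 + maxPhiDeg J := by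
  classical
  obtain ⟨s, a, b, rfl⟩ := hm
  set g := mulPhiRho γφ γρ a b (J.b s)
  have hg : g (shift a b (J.lmb s)) ≠ 0 := by
    rw [mulPhiRho_apply_shift, map_ne_zero]
    exact mem_support_iff.mp (J.b_lm s).1
  set t := (g (shift a b (J.lmb s)))⁻¹ • g
  have ht : t (shift a b (J.lmb s)) = 1 := by simp [t, hg]
  refine ⟨single (shift a b (J.lmb s)) 1 - t, ?_, fun m' hm' => ?_⟩
  · rw [sub_sub_cancel, ← J.span_eq]
    exact Submodule.smul_mem _ _ (mulPhiRho_mem_DSpan (Set.mem_range_self s) a b)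
  have hne : m' ≠ shift a b (J.lmb s) := by
    rintro rfl
    simp [ht] at hm'
  have hm't : m' ∈ g.support := by
    rcases Finset.mem_union.mp (support_sub hm') with h | h
    · exact absurd (Finset.mem_singleton.mp (support_single_subset h)) hne
    · exact support_smul h
  rw [support_mulPhiRho] at hm't
  obtain ⟨m'', hm'', rfl⟩ := Finset.mem_image.mp hm't
  have hlt := (J.b_lm s).2 m'' hm'' (fun h => hne (by rw [h]))
  refine ⟨hlt.shift a b, ?_⟩
  have := le_maxPhiDeg hm''
  simp only [shift]
  omega

/-- A reduction step (`exists_reducer`) raises the `φ`-degree by at most `c = maxPhiDeg J`, and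
only when it moves to a larger index `i`; so this weight never increases under reduction. -/
def phiWeight (c : ℕ) (m : MonIx d) : ℤ := m.2.1 - m.1.val * c

lemma phiWeight_le_of_mlt {c : ℕ} {m m' : MonIx d} (h : MLt m' m) (hdeg : m'.2.1 ≤ m.2.1 + c) :
    phiWeight c m' ≤ phiWeight c m := by
  unfold phiWeight
  rcases h with h | ⟨h, h'⟩
  · have : ((m.1.val : ℤ) + 1) * c ≤ m'.1.val * c := by exact_mod_cast Nat.mul_le_mul_right c h
    linarith
  · rw [h]
    omega

lemma phiDeg_le_of_phiWeight_le {c : ℕ} {m m' : MonIx d}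
    (h : phiWeight c m' ≤ phiWeight c m) : m'.2.1 ≤ m.2.1 + d * c := by
  unfold phiWeight at h
  have : (m'.1.val : ℤ) * c ≤ d * c := by gcongr; exact m'.1.isLt.le
  have : (0 : ℤ) ≤ m.1.val * c := by positivity
  omega

lemma exists_reduced_single (m : MonIx d) :
    ∃ v, single m 1 - v ∈ N ∧ ∀ m' ∈ v.support,
      m' ∉ lmSet J ∧ phiWeight (maxPhiDeg J) m' ≤ phiWeight (maxPhiDeg J) m := by
  classical
  induction m using wellFounded_mlt.induction with
  | _ m ih =>
  by_cases hm : m ∈ lmSet J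
  · obtain ⟨tail, htail, hlt⟩ := exists_reducer hm
    obtain ⟨v, hv, hvP⟩ := exists_sub_mem_of_forall_mem_support
      (P := fun _ m' => m' ∉ lmSet J ∧ phiWeight (maxPhiDeg J) m' ≤ phiWeight (maxPhiDeg J) m)
      tail fun m₀ hm₀ => by
        obtain ⟨v, hv, hvP⟩ := ih m₀ (hlt m₀ hm₀).1
        exact ⟨v, hv, fun m' hm' => ⟨(hvP m' hm').1,
          (hvP m' hm').2.trans (phiWeight_le_of_mlt (hlt m₀ hm₀).1 (hlt m₀ hm₀).2)⟩⟩
    refine ⟨v, by simpa using add_mem htail hv, fun m' hm' => ?_⟩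
    obtain ⟨_, _, h⟩ := hvP m' hm'
    exact h
  · refine ⟨single m 1, by simp, fun m' hm' => ?_⟩
    rw [Finset.mem_singleton.mp (support_single_subset hm')]
    exact ⟨hm, le_rfl⟩

lemma exists_reduced (f : Fr K d) :
    ∃ v, f - v ∈ N ∧ ∀ m' ∈ v.support, m' ∉ lmSet J ∧
      ∃ m ∈ f.support, phiWeight (maxPhiDeg J) m' ≤ phiWeight (maxPhiDeg J) m := by
  obtain ⟨v, hv, hvP⟩ := exists_sub_mem_of_forall_mem_support f
    fun m _ => exists_reduced_single (J := J) m
  refine ⟨v, hv, fun m' hm' => ?_⟩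
  obtain ⟨m, hm, hlm, hw⟩ := hvP m' hm'
  exact ⟨hlm, m, hm, hw⟩

lemma eq_zero_of_mem_of_forall_not_mem_lmSet {u : Fr K d} (hu : u ∈ N)
    (h : ∀ m ∈ u.support, m ∉ lmSet J) : u = 0 := by
  by_contra hne
  obtain ⟨m, hm⟩ := exists_isLm hne
  obtain ⟨s, a, b, -, -, hcone⟩ := J.lm_cover u hu hne m hm
  exact h m hm.1 ⟨s, a, b, hcone⟩

lemma nVal_lt_top_iff (i : Fin d) : nVal γφ γρ J i < ⊤ ↔ ∃ k, (i, k, 0) ∈ lmSet J := by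
  constructor
  · intro h
    obtain ⟨_, ⟨n, rfl, s, hs⟩, -⟩ := sInf_lt_iff.mp h
    exact ⟨n, s, 0, 0, by rw [hs]; rfl⟩
  · rintro ⟨k, s, a, b, hs⟩
    have hlm : J.lmb s = (i, k - a, 0) := by
      rcases hl : J.lmb s with ⟨i', k', j'⟩
      simp only [hl, shift, Prod.mk.injEq] at hs
      obtain ⟨rfl, hk, hj⟩ := hs
      simp only [Prod.mk.injEq, true_and]
      omega
    refine lt_of_le_of_lt (sInf_le ?_) (WithTop.natCast_lt_top (k - a))
    exact ⟨k - a, rfl, s, hlm⟩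

end Reduction

section FiniteGeneration

variable {γφ γρ : K →+* K} {N : Submodule K (Fr K d)} {J : JanetBasis γφ γρ d N}
  {M : Type} [AddCommGroup M] [Module K M] {F S : M →+ M} {κb : Fin d → M}

lemma exists_phiDeg_bound_of_span_eq_top
    (hF : ∀ (x : K) (m : M), F (x • m) = γφ x • F m)
    (hS : ∀ (x : K) (m : M), S (x • m) = γρ x • S m)
    (hFS : ∀ m : M, F (S m) = S (F m))
    (hsurj : Function.Surjective (prL K F S κb)) (hN : N ≤ LinearMap.ker (prL K F S κb))
    {n : ℕ} (g : Fin n → M)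
    (hg : Submodule.span K {m : M | ∃ (i : Fin n) (l : ℕ), m = S^[l] (g i)} = ⊤) :
    ∃ C, ∀ x : M, ∃ u, prL K F S κb u = x ∧ ∀ m ∈ u.support, m ∉ lmSet J ∧ m.2.1 ≤ C := by
  classical
  choose h hh using fun t => hsurj (g t)
  set Φ := Finset.univ.sup fun t => (h t).support.sup fun m => m.2.1
  refine ⟨Φ + d * maxPhiDeg J, fun x => ?_⟩
  suffices x ∈ (supported K K {m | m ∉ lmSet J ∧ m.2.1 ≤ Φ + d * maxPhiDeg J}).map
      (prL K F S κb) by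
    obtain ⟨u, hu, rfl⟩ := Submodule.mem_map.mp this
    exact ⟨u, rfl, fun m hm => (mem_supported K u).mp hu hm⟩
  refine Submodule.span_le.mpr ?_ (eq_top_iff.mp hg Submodule.mem_top)
  -- `S^l g_t = pr (ρ^l h_t)`, and the normal form of `ρ^l h_t` has `φ`-degree
  -- `≤ Φ + d * maxPhiDeg J`
  rintro _ ⟨t, l, rfl⟩
  obtain ⟨v, hv, hvP⟩ := exists_reduced (J := J) (mulPhiRho γφ γρ 0 l (h t))
  refine ⟨v, (mem_supported K v).mpr fun m' hm' => ?_, ?_⟩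
  · obtain ⟨hlm, m, hm, hw⟩ := hvP m' hm'
    rw [support_mulPhiRho] at hm
    obtain ⟨m₀, hm₀, rfl⟩ := Finset.mem_image.mp hm
    have hm₀Φ : m₀.2.1 ≤ Φ :=
      (Finset.le_sup (f := fun m : MonIx d => m.2.1) hm₀).trans
        (Finset.le_sup (f := fun t => (h t).support.sup fun m => m.2.1) (Finset.mem_univ t))
    exact ⟨hlm, (phiDeg_le_of_phiWeight_le hw).trans (by simp only [shift]; omega)⟩
  · have := hN hv
    rw [LinearMap.mem_ker, map_sub, sub_eq_zero, prL_mulPhiRho hF hS hFS, hh] at this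
    exact this.symm

lemma mem_lmSet_of_phiDeg_bound (hN : LinearMap.ker (prL K F S κb) ≤ N) {C : ℕ}
    (hC : ∀ x : M, ∃ u, prL K F S κb u = x ∧ ∀ m ∈ u.support, m ∉ lmSet J ∧ m.2.1 ≤ C)
    (i : Fin d) : (i, C + 1, 0) ∈ lmSet J := by
  classical
  obtain ⟨u, hu, hC⟩ := hC (prL K F S κb (single (i, C + 1, 0) 1))
  by_contra hi
  have hW : single (i, C + 1, 0) 1 - u = 0 := by
    refine eq_zero_of_mem_of_forall_not_mem_lmSet (J := J) (hN ?_) fun m hm => ?_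
    · rw [LinearMap.mem_ker, map_sub, hu, sub_self]
    · rcases Finset.mem_union.mp (support_sub hm) with h | h
      · rwa [Finset.mem_singleton.mp (support_single_subset h)]
      · exact (hC m h).1
  rw [sub_eq_zero] at hW
  have : C + 1 ≤ C := (hC (i, C + 1, 0) (by simp [← hW])).2
  omega

lemma span_iterate_eq_top_of_mem_lmSet (hFS : ∀ m : M, F (S m) = S (F m))
    (hsurj : Function.Surjective (prL K F S κb)) (hN : N ≤ LinearMap.ker (prL K F S κb))
    {nb : Fin d → ℕ} (hnb : ∀ i, (i, nb i, 0) ∈ lmSet J) :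
    Submodule.span K
      {x : M | ∃ (p : Σ i, Fin (nb i)) (l : ℕ), x = S^[l] (F^[p.2] (κb p.1))} = ⊤ := by
  refine eq_top_iff.mpr fun x _ => ?_
  obtain ⟨f, rfl⟩ := hsurj x
  obtain ⟨v, hv, hvP⟩ := exists_reduced (J := J) f
  have hfv : prL K F S κb f = prL K F S κb v := by
    rw [← sub_eq_zero, ← map_sub]
    exact hN hv
  have hstd : v ∈ supported K K (lmSet J)ᶜ := (mem_supported K v).mpr fun m hm => (hvP m hm).1
  rw [hfv]
  refine Submodule.span_mono ?_ ((span_image_eq_map_linearCombination K _).ge ⟨v, hstd, rfl⟩)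
  rintro _ ⟨⟨i, k, j⟩, hm, rfl⟩
  have hk : k < nb i := by
    by_contra hk
    refine hm ?_
    have := shift_mem_lmSet (hnb i) (k - nb i) j
    simp only [shift] at this
    rwa [Nat.add_sub_cancel' (not_lt.mp hk), zero_add] at this
  exact ⟨⟨i, k, hk⟩, j, (Function.Commute.iterate_iterate hFS k j).eq _⟩

end FiniteGeneration

end JanetSetup

theorem fg_over_Krho_iff_nVal_lt_top_general
    {K : Type} [Field K] {d : ℕ} (γφ γρ : K →+* K)
    {M : Type} [AddCommGroup M] [Module K M]
    -- `M` is a left `D`-module: `F` and `S` are the commuting semilinear actions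
    -- of `φ` and `ρ` on `M`
    (F S : M →+ M)
    (hF : ∀ (x : K) (m : M), F (x • m) = γφ x • F m)
    (hS : ∀ (x : K) (m : M), S (x • m) = γρ x • S m)
    (hFS : ∀ m : M, F (S m) = S (F m))
    -- `M` is free of rank `d` as `K⟨φ⟩`-module with basis `κ̄_1, …, κ̄_d`
    (κb : Fin d → M)
    (hli : LinearIndependent K fun p : Fin d × ℕ => F^[p.2] (κb p.1))
    (hsp : Submodule.span K (Set.range fun p : Fin d × ℕ => F^[p.2] (κb p.1)) = ⊤)
    -- the `ρ`-action on the basis is given by the matrix `D ∈ Mat_{d×d}(K⟨φ⟩)`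
    (Dmat : Fin d → Fin d → (ℕ →₀ K))
    (hact : ∀ i, S (κb i) = ∑ j : Fin d, (Dmat i j).sum fun k x => x • F^[k] (κb j))
    -- `J` is a Janet basis of `⟨p_1, …, p_d⟩`
    (J : JanetBasis γφ γρ d (DSpan γφ γρ (Set.range (pelt Dmat))))
    :
    (∃ (n : ℕ) (g : Fin n → M),
        Submodule.span K {m : M | ∃ (i : Fin n) (l : ℕ), m = S^[l] (g i)} = ⊤) ↔
      (∀ i : Fin d, nVal γφ γρ J i < ⊤) := by
  have hker := ker_prL_eq hF hS hFS hli hact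
  have hsurj := prL_surjective (S := S) hsp
  constructor
  · rintro ⟨n, g, hg⟩ i
    obtain ⟨C, hC⟩ := exists_phiDeg_bound_of_span_eq_top (J := J) hF hS hFS hsurj hker.ge g hg
    exact (nVal_lt_top_iff i).mpr ⟨C + 1, mem_lmSet_of_phiDeg_bound hker.le hC i⟩
  · intro h
    choose nb hnb using fun i => (nVal_lt_top_iff i).mp (h i)
    exact exists_fin_span_iterate_eq_top _ _
      (span_iterate_eq_top_of_mem_lmSet hFS hsurj hker.ge hnb)

theorem fg_over_Krho_iff_nVal_lt_top
    {K : Type} [Field K] {d : ℕ} (γφ γρ : K →+* K)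
    (hcomm : ∀ x : K, γφ (γρ x) = γρ (γφ x))
    {M : Type} [AddCommGroup M] [Module K M]
    -- `M` is a left `D`-module: `F` and `S` are the commuting semilinear actions
    -- of `φ` and `ρ` on `M`
    (F S : M →+ M)
    (hF : ∀ (x : K) (m : M), F (x • m) = γφ x • F m)
    (hS : ∀ (x : K) (m : M), S (x • m) = γρ x • S m)
    (hFS : ∀ m : M, F (S m) = S (F m))
    -- `M` is free of rank `d` as `K⟨φ⟩`-module with basis `κ̄_1, …, κ̄_d`
    (κb : Fin d → M)
    (hli : LinearIndependent K fun p : Fin d × ℕ => F^[p.2] (κb p.1))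
    (hsp : Submodule.span K (Set.range fun p : Fin d × ℕ => F^[p.2] (κb p.1)) = ⊤)
    -- the `ρ`-action on the basis is given by the matrix `D ∈ Mat_{d×d}(K⟨φ⟩)`
    (Dmat : Fin d → Fin d → (ℕ →₀ K))
    (hact : ∀ i, S (κb i) = ∑ j : Fin d, (Dmat i j).sum fun k x => x • F^[k] (κb j))
    -- `J` is a Janet basis of `⟨p_1, …, p_d⟩`
    (J : JanetBasis γφ γρ d (DSpan γφ γρ (Set.range (pelt Dmat))))
    :
    (∃ (n : ℕ) (g : Fin n → M),
        Submodule.span K {m : M | ∃ (i : Fin n) (l : ℕ), m = S^[l] (g i)} = ⊤) ↔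
      (∀ i : Fin d, nVal γφ γρ J i < ⊤) :=
  fg_over_Krho_iff_nVal_lt_top_general γφ γρ F S hF hS hFS κb hli hsp Dmat hact J
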